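/- arXiv:1303.6774 — 3 statements merged into one kernel-verified Lean document; each statement's English description precedes it below -/
import Mathlib

section
/- Let X and Y be compact metric spaces, let G ⊆ X and H ⊆ Y be countable dense subsets that are open in X and Y respectively, and let ∂G := X \ G and ∂H := Y \ H be the 'boundaries'; suppose ∂G and ∂H are nonempty and G, H are infinite discrete subspaces accumulating exactly on ∂G, ∂H. Then for every homeomorphism f : ∂G → ∂H there exists a bijection b : G → H such that the combined map b ∪ f : X → Y is a homeomorphism. -/
theorem my_back_and_forth {α β : Type*} (eα : ℕ ≃ α) (eβ : ℕ ≃ β) (C : α → β → Prop)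
    (hfwd : ∀ a (B : List β), ∃ b, b ∉ B ∧ C a b)
    (hbwd : ∀ b (A : List α), ∃ a, a ∉ A ∧ C a b) :
    ∃ e : α ≃ β, ∀ a, C a (e a) := by
  classical
  choose Fb hFb1 hFb2 using hfwd
  choose Fa hFa1 hFa2 using hbwd
  obtain ⟨step, hstep1, hstep2, hstep3, hstep4, hstep5⟩ :
      ∃ step : ℕ → List (α × β) → α × β,
        (∀ n l, (step n l).1 ∉ l.map Prod.fst) ∧
        (∀ n l, (step n l).2 ∉ l.map Prod.snd) ∧
        (∀ n l, C (step n l).1 (step n l).2) ∧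
        (∀ n l, Even n → eα (n / 2) ∈ l.map Prod.fst ∨ (step n l).1 = eα (n / 2)) ∧
        (∀ n l, ¬Even n → eβ (n / 2) ∈ l.map Prod.snd ∨ (step n l).2 = eβ (n / 2)) := by
    refine ⟨fun n l =>
      if hn : Even n then
        let a := if eα (n / 2) ∈ l.map Prod.fst then Fa (eβ 0) (l.map Prod.fst)
          else eα (n / 2)
        (a, Fb a (l.map Prod.snd))
      else
        let b := if eβ (n / 2) ∈ l.map Prod.snd then Fb (eα 0) (l.map Prod.snd)
          else eβ (n / 2)
        (Fa b (l.map Prod.fst), b), ?_, ?_, ?_, ?_, ?_⟩ <;> intro n l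
    · by_cases hn : Even n
      · simp only [dif_pos hn]
        split_ifs with h
        · exact hFa1 _ _
        · exact h
      · simp only [dif_neg hn]
        exact hFa1 _ _
    · by_cases hn : Even n
      · simp only [dif_pos hn]
        exact hFb1 _ _
      · simp only [dif_neg hn]
        split_ifs with h
        · exact hFb1 _ _
        · exact h
    · by_cases hn : Even n
      · simp only [dif_pos hn]
        exact hFb2 _ _
      · simp only [dif_neg hn]
        exact hFa2 _ _
    · intro hn
      simp only [dif_pos hn]
      split_ifs with h
      · exact Or.inl h
      · exact Or.inr rfl
    · intro hn
      simp only [dif_neg hn]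
      split_ifs with h
      · exact Or.inl h
      · exact Or.inr rfl
  obtain ⟨L, hL0, hLs⟩ : ∃ L : ℕ → List (α × β),
      L 0 = [] ∧ ∀ n, L (n + 1) = L n ++ [step n (L n)] :=
    ⟨fun n => Nat.rec [] (fun k ih => ih ++ [step k ih]) n, rfl, fun n => rfl⟩
  have hmono : ∀ {m n : ℕ}, m ≤ n → ∀ p ∈ L m, p ∈ L n := by
    intro m n h
    induction h with
    | refl => exact fun p hp => hp
    | step _ ih =>
      intro p hp
      rw [hLs]
      exact List.mem_append_left _ (ih p hp)
  have hnodF : ∀ n, ((L n).map Prod.fst).Nodup := by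
    intro n
    induction n with
    | zero => simp [hL0]
    | succ k ih =>
      rw [hLs, List.map_append, List.nodup_append]
      refine ⟨ih, List.nodup_singleton _, ?_⟩
      intro a ha b hb hab; subst hab
      simp only [List.map_cons, List.map_nil, List.mem_singleton] at hb
      exact hstep1 k (L k) (hb ▸ ha)
  have hnodS : ∀ n, ((L n).map Prod.snd).Nodup := by
    intro n
    induction n with
    | zero => simp [hL0]
    | succ k ih =>
      rw [hLs, List.map_append, List.nodup_append]
      refine ⟨ih, List.nodup_singleton _, ?_⟩
      intro a ha b hb hab; subst hab
      simp only [List.map_cons, List.map_nil, List.mem_singleton] at hb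
      exact hstep2 k (L k) (hb ▸ ha)
  have hCall : ∀ n p, p ∈ L n → C p.1 p.2 := by
    intro n
    induction n with
    | zero => simp [hL0]
    | succ k ih =>
      intro p hp
      rw [hLs] at hp
      rcases List.mem_append.mp hp with h | h
      · exact ih p h
      · rw [List.mem_singleton] at h
        rw [h]
        exact hstep3 k (L k)
  have hcovA : ∀ m, eα m ∈ (L (2 * m + 1)).map Prod.fst := by
    intro m
    have h2 : (2 * m) / 2 = m := by omega
    rw [hLs, List.map_append]
    rcases hstep4 (2 * m) (L (2 * m)) (even_two_mul m) with h | h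
    · rw [h2] at h
      exact List.mem_append_left _ h
    · refine List.mem_append_right _ ?_
      simp [h, h2]
  have hcovB : ∀ m, eβ m ∈ (L (2 * m + 1 + 1)).map Prod.snd := by
    intro m
    have h2 : (2 * m + 1) / 2 = m := by omega
    rw [hLs, List.map_append]
    rcases hstep5 (2 * m + 1) (L (2 * m + 1)) (by simp [Nat.even_add_one, even_two_mul m]) with h | h
    · rw [h2] at h
      exact List.mem_append_left _ h
    · refine List.mem_append_right _ ?_
      simp [h, h2]
  have htot : ∀ a : α, ∃ b n, (a, b) ∈ L n := by
    intro a
    obtain ⟨p, hp, hpa⟩ := List.mem_map.mp (hcovA (eα.symm a))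
    rw [Equiv.apply_symm_apply] at hpa
    exact ⟨p.2, 2 * eα.symm a + 1, by rw [show (a, p.2) = p from by rw [← hpa]]; exact hp⟩
  have hsur : ∀ b : β, ∃ a n, (a, b) ∈ L n := by
    intro b
    obtain ⟨p, hp, hpb⟩ := List.mem_map.mp (hcovB (eβ.symm b))
    rw [Equiv.apply_symm_apply] at hpb
    exact ⟨p.1, 2 * eβ.symm b + 1 + 1, by rw [show (p.1, b) = p from by rw [← hpb]]; exact hp⟩
  have hfun : ∀ {p q : α × β} {m n : ℕ}, p ∈ L m → q ∈ L n → p.1 = q.1 → p = q := by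
    intro p q m n hp hq h
    exact List.inj_on_of_nodup_map (hnodF (max m n))
      (hmono (le_max_left m n) p hp) (hmono (le_max_right m n) q hq) h
  have hfun2 : ∀ {p q : α × β} {m n : ℕ}, p ∈ L m → q ∈ L n → p.2 = q.2 → p = q := by
    intro p q m n hp hq h
    exact List.inj_on_of_nodup_map (hnodS (max m n))
      (hmono (le_max_left m n) p hp) (hmono (le_max_right m n) q hq) h
  choose b0 n0 hb0 using htot
  have hinj : Function.Injective b0 := by
    intro a a' h
    have := hfun2 (hb0 a) (hb0 a') h
    exact congrArg Prod.fst this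
  have hsurj : Function.Surjective b0 := by
    intro b
    obtain ⟨a, n, han⟩ := hsur b
    exact ⟨a, congrArg Prod.snd (hfun (hb0 a) han rfl)⟩
  exact ⟨Equiv.ofBijective b0 ⟨hinj, hsurj⟩, fun a => hCall _ _ (hb0 a)⟩
open scoped Classical in
/-- Let `X`, `Y` be compact metric spaces, `G ⊆ X`, `H ⊆ Y` countable dense open infinite
discrete subsets with nonempty boundaries `∂G = X \ G`, `∂H = Y \ H`.  Any homeomorphism
`f : ∂G → ∂H` extends, for a suitable bijection `b : G → H`, to a homeomorphism
`b ∪ f : X → Y`. -/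
theorem boundary_homeo_extends_to_compactification
    {X Y : Type*} [MetricSpace X] [CompactSpace X] [MetricSpace Y] [CompactSpace Y]
    (G : Set X) (H : Set Y)
    (hGc : G.Countable) (hHc : H.Countable)
    (hGd : Dense G) (hHd : Dense H)
    (hGo : IsOpen G) (hHo : IsOpen H)
    (hGdisc : DiscreteTopology G) (hHdisc : DiscreteTopology H)
    (hGinf : G.Infinite) (hHinf : H.Infinite)
    (hGb : Gᶜ.Nonempty) (hHb : Hᶜ.Nonempty)
    (f : (Gᶜ : Set X) ≃ₜ (Hᶜ : Set Y)) :
    ∃ b : G ≃ H,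
      IsHomeomorph (fun x : X =>
        if hx : x ∈ G then (b ⟨x, hx⟩ : Y) else (f ⟨x, hx⟩ : Y)) := by
  classical
  have hGcl : IsClosed (Gᶜ) := hGo.isClosed_compl
  have hHcl : IsClosed (Hᶜ) := hHo.isClosed_compl
  have hGcpt : IsCompact (Gᶜ) := hGcl.isCompact
  have hHcpt : IsCompact (Hᶜ) := hHcl.isCompact
  -- nearest boundary-point projections
  choose pG hpGmem hpGdist using fun x : X => hGcpt.exists_infDist_eq_dist hGb x
  choose pH hpHmem hpHdist using fun y : Y => hHcpt.exists_infDist_eq_dist hHb y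
  -- picking lemma from density
  have pickH : ∀ y : Y, y ∉ H → ∀ r > (0 : ℝ), ∀ B : List H,
      ∃ h : H, h ∉ B ∧ dist (h : Y) y < r := by
    intro y hy r hr B
    have hfin : ({z : Y | ∃ h ∈ B, (h : Y) = z}).Finite := by
      have : {z : Y | ∃ h ∈ B, (h : Y) = z} = (fun h : H => (h : Y)) '' {h | h ∈ B} := by
        ext z; simp [Set.mem_image]
      rw [this]
      exact B.finite_toSet.image _
    have hUo : IsOpen (Metric.ball y r \ {z : Y | ∃ h ∈ B, (h : Y) = z}) :=
      Metric.isOpen_ball.sdiff hfin.isClosed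
    have hyU : y ∈ Metric.ball y r \ {z : Y | ∃ h ∈ B, (h : Y) = z} := by
      refine ⟨Metric.mem_ball_self hr, ?_⟩
      rintro ⟨h, -, hhy⟩
      exact hy (hhy ▸ h.2)
    obtain ⟨z, hzH, hzU⟩ := hHd.exists_mem_open hUo ⟨y, hyU⟩
    exact ⟨⟨z, hzH⟩, fun hmem => hzU.2 ⟨⟨z, hzH⟩, hmem, rfl⟩, by
      simpa [Metric.mem_ball] using hzU.1⟩
  have pickG : ∀ x : X, x ∉ G → ∀ r > (0 : ℝ), ∀ B : List G,
      ∃ g : G, g ∉ B ∧ dist (g : X) x < r := by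
    intro x hx r hr B
    have hfin : ({z : X | ∃ g ∈ B, (g : X) = z}).Finite := by
      have : {z : X | ∃ g ∈ B, (g : X) = z} = (fun g : G => (g : X)) '' {g | g ∈ B} := by
        ext z; simp [Set.mem_image]
      rw [this]
      exact B.finite_toSet.image _
    have hUo : IsOpen (Metric.ball x r \ {z : X | ∃ g ∈ B, (g : X) = z}) :=
      Metric.isOpen_ball.sdiff hfin.isClosed
    have hxU : x ∈ Metric.ball x r \ {z : X | ∃ g ∈ B, (g : X) = z} := by
      refine ⟨Metric.mem_ball_self hr, ?_⟩
      rintro ⟨g, -, hgx⟩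
      exact hx (hgx ▸ g.2)
    obtain ⟨z, hzG, hzU⟩ := hGd.exists_mem_open hUo ⟨x, hxU⟩
    exact ⟨⟨z, hzG⟩, fun hmem => hzU.2 ⟨⟨z, hzG⟩, hmem, rfl⟩, by
      simpa [Metric.mem_ball] using hzU.1⟩
  have hposG : ∀ g : G, 0 < Metric.infDist (g : X) Gᶜ := fun g =>
    (hGcl.notMem_iff_infDist_pos hGb).mp (by simp [g.2])
  have hposH : ∀ h : H, 0 < Metric.infDist (h : Y) Hᶜ := fun h =>
    (hHcl.notMem_iff_infDist_pos hHb).mp (by simp [h.2])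
  -- the matching condition
  set C : G → H → Prop := fun g h =>
    dist (h : Y) (f ⟨pG g, hpGmem g⟩ : Y) < Metric.infDist (g : X) Gᶜ ∨
    dist (g : X) (f.symm ⟨pH h, hpHmem h⟩ : X) < Metric.infDist (h : Y) Hᶜ
    with hCdef
  have : Countable G := hGc.to_subtype
  have : Infinite G := hGinf.to_subtype
  have : Countable H := hHc.to_subtype
  have : Infinite H := hHinf.to_subtype
  obtain ⟨dG⟩ := nonempty_denumerable G
  obtain ⟨dH⟩ := nonempty_denumerable H
  obtain ⟨e, he⟩ := my_back_and_forth (@Denumerable.eqv G dG).symm (@Denumerable.eqv H dH).symm C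
    (by
      intro g B
      obtain ⟨h, hB, hd⟩ := pickH (f ⟨pG g, hpGmem g⟩ : Y) (f ⟨pG g, hpGmem g⟩).2
        _ (hposG g) B
      exact ⟨h, hB, Or.inl hd⟩)
    (by
      intro h A
      obtain ⟨g, hA, hd⟩ := pickG (f.symm ⟨pH h, hpHmem h⟩ : X)
        (f.symm ⟨pH h, hpHmem h⟩).2 _ (hposH h) A
      exact ⟨g, hA, Or.inr hd⟩)
  refine ⟨e, ?_⟩
  rw [isHomeomorph_iff_continuous_bijective]
  constructor
  · -- continuity
    rw [continuous_iff_continuousAt]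
    intro x
    by_cases hx : x ∈ G
    · -- isolated point
      have hsing : {x} ∈ nhds x := by
        have h1 : IsOpen ({⟨x, hx⟩} : Set G) := isOpen_discrete _
        obtain ⟨U, hU, hUeq⟩ := isOpen_induced_iff.mp h1
        have hxU : x ∈ U := by
          have : (⟨x, hx⟩ : G) ∈ Subtype.val ⁻¹' U := by rw [hUeq]; rfl
          exact this
        have hsub : U ∩ G ⊆ {x} := by
          rintro z ⟨hzU, hzG⟩
          have : (⟨z, hzG⟩ : G) ∈ Subtype.val ⁻¹' U := hzU
          rw [hUeq] at this
          simpa [Subtype.ext_iff] using this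
        exact Filter.mem_of_superset ((hU.inter hGo).mem_nhds ⟨hxU, hx⟩) hsub
      exact (tendsto_pure_nhds _ x).mono_left (Filter.le_pure_iff.mpr hsing)
    · -- boundary point
      have hxc : x ∈ Gᶜ := hx
      rw [Metric.continuousAt_iff]
      intro ε hε
      have : CompactSpace (Gᶜ : Set X) := isCompact_iff_compactSpace.mp hGcpt
      have hfu : UniformContinuous f := CompactSpace.uniformContinuous_of_continuous f.continuous
      obtain ⟨δ1, hδ1, hδ1p⟩ := Metric.uniformContinuous_iff.mp hfu (ε / 2) (by linarith)
      set η := min (ε / 2) (δ1 / 2) with hηdef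
      have hηpos : 0 < η := lt_min (by linarith) (by linarith)
      set Bad : Set X := {z : X | ∃ hz : z ∈ G, η ≤ Metric.infDist (e ⟨z, hz⟩ : Y) Hᶜ}
        with hBaddef
      have hBadfin : Bad.Finite := by
        have hFarfin : ({y : Y | η ≤ Metric.infDist y Hᶜ}).Finite := by
          have hcl : IsClosed {y : Y | η ≤ Metric.infDist y Hᶜ} :=
            isClosed_le continuous_const (Metric.continuous_infDist_pt _)
          have hsub : {y : Y | η ≤ Metric.infDist y Hᶜ} ⊆ H := by
            intro y hy
            by_contra hyH
            have h0 : Metric.infDist y Hᶜ = 0 := Metric.infDist_zero_of_mem hyH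
            rw [Set.mem_setOf_eq, h0] at hy
            linarith
          have hdisc : DiscreteTopology ({y : Y | η ≤ Metric.infDist y Hᶜ} : Set Y) :=
            DiscreteTopology.of_subset hHdisc hsub
          exact hcl.isCompact.finite ⟨hdisc⟩
        have hsub : Bad ⊆ (fun h : H => (e.symm h : X)) ''
            (Subtype.val ⁻¹' {y : Y | η ≤ Metric.infDist y Hᶜ}) := by
          rintro z ⟨hz, hfar⟩
          exact ⟨e ⟨z, hz⟩, hfar, by simp⟩
        exact Set.Finite.subset
          ((hFarfin.preimage (Set.injOn_of_injective Subtype.val_injective)).image _) hsub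
      have hxB : x ∉ Bad := fun ⟨hz, _⟩ => hx hz
      obtain ⟨δ2, hδ2, hball⟩ := Metric.isOpen_iff.mp hBadfin.isClosed.isOpen_compl x hxB
      refine ⟨min δ2 (min (δ1 / 2) (ε / 2)), by positivity, ?_⟩
      intro z hz
      have hzδ2 : dist z x < δ2 := lt_of_lt_of_le hz (min_le_left _ _)
      have hzδ1 : dist z x < δ1 / 2 := lt_of_lt_of_le hz ((min_le_right _ _).trans (min_le_left _ _))
      have hzε : dist z x < ε / 2 := lt_of_lt_of_le hz ((min_le_right _ _).trans (min_le_right _ _))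
      by_cases hzG : z ∈ G
      · simp only [dif_pos hzG, dif_neg hx]
        rcases he ⟨z, hzG⟩ with hleft | hright
        · -- forward-type pair
          have h1 : Metric.infDist z Gᶜ ≤ dist z x := Metric.infDist_le_dist_of_mem hxc
          have h2 : dist (pG z) x < δ1 := by
            have := hpGdist z
            calc dist (pG z) x ≤ dist (pG z) z + dist z x := dist_triangle _ _ _
              _ = Metric.infDist z Gᶜ + dist z x := by rw [dist_comm, ← this]
              _ ≤ dist z x + dist z x := by linarith
              _ < δ1 := by linarith
          have h3 : dist (f ⟨pG z, hpGmem z⟩ : Y) (f ⟨x, hxc⟩ : Y) < ε / 2 := by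
            have := hδ1p (a := ⟨pG z, hpGmem z⟩) (b := ⟨x, hxc⟩) (by
              rw [Subtype.dist_eq]; exact h2)
            rwa [Subtype.dist_eq] at this
          calc dist (e ⟨z, hzG⟩ : Y) (f ⟨x, hxc⟩ : Y)
              ≤ dist (e ⟨z, hzG⟩ : Y) (f ⟨pG z, hpGmem z⟩ : Y)
                + dist (f ⟨pG z, hpGmem z⟩ : Y) (f ⟨x, hxc⟩ : Y) :=
                dist_triangle _ _ _
            _ < Metric.infDist z Gᶜ + ε / 2 := by
                exact add_lt_add_of_lt_of_lt hleft h3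
            _ ≤ dist z x + ε / 2 := by linarith
            _ < ε := by linarith
        · -- backward-type pair
          have hzBad : z ∉ Bad := hball (Metric.mem_ball.mpr hzδ2)
          have hnear : Metric.infDist (e ⟨z, hzG⟩ : Y) Hᶜ < η := by
            by_contra hcon
            exact hzBad ⟨hzG, not_lt.mp hcon⟩
          set h' : H := e ⟨z, hzG⟩ with hh'
          set q : (Gᶜ : Set X) := f.symm ⟨pH h', hpHmem h'⟩ with hq
          have hq2 : dist (q : X) x < δ1 := by
            have hηδ : η ≤ δ1 / 2 := min_le_right _ _
            calc dist (q : X) x ≤ dist (q : X) z + dist z x := dist_triangle _ _ _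
              _ < Metric.infDist (h' : Y) Hᶜ + dist z x := by
                  rw [dist_comm]; exact add_lt_add_of_lt_of_le hright le_rfl
              _ < η + δ1 / 2 := add_lt_add hnear hzδ1
              _ ≤ δ1 := by linarith
          have h3 : dist (f q : Y) (f ⟨x, hxc⟩ : Y) < ε / 2 := by
            have := hδ1p (a := q) (b := ⟨x, hxc⟩) (by rw [Subtype.dist_eq]; exact hq2)
            rwa [Subtype.dist_eq] at this
          have hfq : (f q : Y) = pH h' := by
            rw [hq, f.apply_symm_apply]
          have h4 : dist (h' : Y) (pH h') < ε / 2 := by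
            have := hpHdist (h' : Y)
            have hηε : η ≤ ε / 2 := min_le_left _ _
            calc dist (h' : Y) (pH h') = Metric.infDist (h' : Y) Hᶜ := (hpHdist _).symm
              _ < η := hnear
              _ ≤ ε / 2 := hηε
          calc dist (e ⟨z, hzG⟩ : Y) (f ⟨x, hxc⟩ : Y)
              ≤ dist (h' : Y) (pH h') + dist (pH h') (f ⟨x, hxc⟩ : Y) :=
                dist_triangle _ _ _
            _ < ε / 2 + ε / 2 := by
                refine add_lt_add_of_lt_of_lt h4 ?_
                rw [← hfq]
                exact h3
            _ = ε := by ring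
      · simp only [dif_neg hzG, dif_neg hx]
        have : dist (f ⟨z, hzG⟩ : Y) (f ⟨x, hxc⟩ : Y) < ε / 2 := by
          have := hδ1p (a := ⟨z, hzG⟩) (b := ⟨x, hxc⟩) (by
            rw [Subtype.dist_eq]; exact lt_trans hzδ1 (by linarith))
          rwa [Subtype.dist_eq] at this
        linarith
  · -- bijectivity
    constructor
    · intro x1 x2 hx12
      by_cases h1 : x1 ∈ G <;> by_cases h2 : x2 ∈ G
      · simp only [dif_pos h1, dif_pos h2] at hx12
        have := e.injective (Subtype.ext hx12)
        exact congrArg Subtype.val this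
      · simp only [dif_pos h1, dif_neg h2] at hx12
        exact absurd ((e ⟨x1, h1⟩).2) (by rw [hx12]; exact (f ⟨x2, h2⟩).2)
      · simp only [dif_neg h1, dif_pos h2] at hx12
        exact absurd ((e ⟨x2, h2⟩).2) (by rw [← hx12]; exact (f ⟨x1, h1⟩).2)
      · simp only [dif_neg h1, dif_neg h2] at hx12
        have := f.injective (Subtype.ext hx12)
        have := congrArg Subtype.val this
        exact this
    · intro y
      by_cases hy : y ∈ H
      · refine ⟨(e.symm ⟨y, hy⟩ : X), ?_⟩
        have hmem : (e.symm ⟨y, hy⟩ : X) ∈ G := (e.symm ⟨y, hy⟩).2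
        simp only [dif_pos hmem, Subtype.coe_eta, Equiv.apply_symm_apply]
      · have hy' : y ∈ Hᶜ := hy
        refine ⟨(f.symm ⟨y, hy'⟩ : X), ?_⟩
        have hmem : (f.symm ⟨y, hy'⟩ : X) ∉ G := (f.symm ⟨y, hy'⟩).2
        simp only [dif_neg hmem, Subtype.coe_eta, Homeomorph.apply_symm_apply]
end

section
/- Let X be a compact metric space, D ⊆ X a dense subset, and π : D → X \ D a function with lim_{d} dist(d, π(d)) = 0 (meaning: for every ε > 0 all but finitely many d ∈ D satisfy dist(d, π(d)) < ε, assuming D is discrete and infinite). If f : X \ D → X' \ D' is a homeomorphism between the complements (with X', D' satisfying the same hypotheses) and b : D → D' is a bijection satisfying lim_d dist(b(d), f(π(d))) = 0, then b ∪ f : X → X' is a homeomorphism. -/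
open scoped Classical in
/-- Key reduction step: given compact metric spaces `X`, `X'` with dense, infinite
discrete-and-open subsets `D`, `D'`, a projection `π : D → X \ D` with vanishing
displacement, a homeomorphism `f` of the complements, and a bijection `b : D → D'`
asymptotically tracking `f ∘ π`, the combined map `b ∪ f : X → X'` is a homeomorphism. -/
theorem tracking_bijection_gives_homeomorphism
    {X X' : Type*} [MetricSpace X] [CompactSpace X] [MetricSpace X'] [CompactSpace X']
    (D : Set X) (D' : Set X')
    (hDd : Dense D) (hD'd : Dense D')
    (hDiso : ∀ d ∈ D, {d} ∈ nhds d) (hD'iso : ∀ d ∈ D', {d} ∈ nhds d)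
    (hDinf : D.Infinite) (hD'inf : D'.Infinite)
    (π : D → (Dᶜ : Set X)) (π' : D' → (D'ᶜ : Set X'))
    (hπ : ∀ ε > (0 : ℝ), {d : D | ε ≤ dist (d : X) ((π d : X))}.Finite)
    (hπ' : ∀ ε > (0 : ℝ), {d : D' | ε ≤ dist (d : X') ((π' d : X'))}.Finite)
    (f : (Dᶜ : Set X) ≃ₜ (D'ᶜ : Set X'))
    (b : D ≃ D')
    (hb : ∀ ε > (0 : ℝ), {d : D | ε ≤ dist ((b d : X')) ((f (π d) : X'))}.Finite) :
    IsHomeomorph (fun x : X =>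
      if hx : x ∈ D then (b ⟨x, hx⟩ : X') else (f ⟨x, hx⟩ : X')) := by
  set F : X → X' := fun x =>
    if hx : x ∈ D then (b ⟨x, hx⟩ : X') else (f ⟨x, hx⟩ : X') with hFdef
  -- D is open
  have hDopen : IsOpen D := by
    rw [isOpen_iff_mem_nhds]
    intro d hd
    exact Filter.mem_of_superset (hDiso d hd) (by simpa using hd)
  have hDc : IsClosed (Dᶜ : Set X) := hDopen.isClosed_compl
  have hcomp : CompactSpace (Dᶜ : Set X) := isCompact_iff_compactSpace.mp hDc.isCompact
  have hgc : Continuous (fun y : (Dᶜ : Set X) => (f y : X')) :=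
    continuous_subtype_val.comp f.continuous
  have hunif : UniformContinuous (fun y : (Dᶜ : Set X) => (f y : X')) :=
    CompactSpace.uniformContinuous_of_continuous hgc
  rw [Metric.uniformContinuous_iff] at hunif
  have hcont : Continuous F := by
    rw [continuous_iff_continuousAt]
    intro x
    by_cases hx : x ∈ D
    · apply Filter.EventuallyEq.continuousAt (y := F x)
      filter_upwards [hDiso x hx] with y hy
      simp only [Set.mem_singleton_iff] at hy
      subst hy; rfl
    · rw [Metric.continuousAt_iff]
      intro ε hε
      obtain ⟨δ, hδ, hδ'⟩ := hunif (ε / 3) (by positivity)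
      -- finite exceptional set
      have hSfin : ({d : D | δ / 2 ≤ dist (d : X) ((π d : X))} ∪
          {d : D | ε / 3 ≤ dist ((b d : X')) ((f (π d) : X'))}).Finite :=
        (hπ (δ / 2) (by positivity)).union (hb (ε / 3) (by positivity))
      set S : Set X := Subtype.val '' ({d : D | δ / 2 ≤ dist (d : X) ((π d : X))} ∪
          {d : D | ε / 3 ≤ dist ((b d : X')) ((f (π d) : X'))}) with hSdef
      have hSfin' : S.Finite := hSfin.image _
      have hxS : x ∉ S := by
        intro hxS
        obtain ⟨d, _, hdx⟩ := hxS
        exact hx (hdx ▸ d.2)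
      obtain ⟨r, hr, hball⟩ := Metric.isOpen_iff.mp hSfin'.isClosed.isOpen_compl x hxS
      refine ⟨min r (δ / 2), by positivity, ?_⟩
      intro y hy
      have hyr : dist y x < r := lt_of_lt_of_le hy (min_le_left _ _)
      have hyδ : dist y x < δ / 2 := lt_of_lt_of_le hy (min_le_right _ _)
      by_cases hyD : y ∈ D
      · have hynS : (⟨y, hyD⟩ : D) ∉ ({d : D | δ / 2 ≤ dist (d : X) ((π d : X))} ∪
            {d : D | ε / 3 ≤ dist ((b d : X')) ((f (π d) : X'))}) := by
          intro hmem
          exact hball (Metric.mem_ball.mpr hyr) ⟨⟨y, hyD⟩, hmem, rfl⟩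
        rw [Set.mem_union] at hynS
        push_neg at hynS
        obtain ⟨h1, h2⟩ := hynS
        simp only [Set.mem_setOf_eq, not_le] at h1 h2
        have hπx : dist (π ⟨y, hyD⟩) (⟨x, hx⟩ : (Dᶜ : Set X)) < δ := by
          rw [Subtype.dist_eq]
          calc dist ((π ⟨y, hyD⟩ : X)) x
              ≤ dist ((π ⟨y, hyD⟩ : X)) y + dist y x := dist_triangle _ _ _
            _ < δ / 2 + δ / 2 := by
                have := h1
                rw [dist_comm] at this
                exact add_lt_add this hyδ
            _ = δ := by ring
        have hf : dist ((f (π ⟨y, hyD⟩) : X')) ((f ⟨x, hx⟩ : X')) < ε / 3 := hδ' hπx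
        have hFy : F y = (b ⟨y, hyD⟩ : X') := dif_pos hyD
        have hFx : F x = (f ⟨x, hx⟩ : X') := dif_neg hx
        rw [hFy, hFx]
        calc dist ((b ⟨y, hyD⟩ : X')) ((f ⟨x, hx⟩ : X'))
            ≤ dist ((b ⟨y, hyD⟩ : X')) ((f (π ⟨y, hyD⟩) : X')) +
              dist ((f (π ⟨y, hyD⟩) : X')) ((f ⟨x, hx⟩ : X')) := dist_triangle _ _ _
          _ < ε / 3 + ε / 3 := add_lt_add h2 hf
          _ < ε := by linarith
      · have hFy : F y = (f ⟨y, hyD⟩ : X') := dif_neg hyD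
        have hFx : F x = (f ⟨x, hx⟩ : X') := dif_neg hx
        rw [hFy, hFx]
        have : dist (⟨y, hyD⟩ : (Dᶜ : Set X)) (⟨x, hx⟩ : (Dᶜ : Set X)) < δ := by
          rw [Subtype.dist_eq]; exact hyδ.trans (by linarith)
        exact (hδ' this).trans (by linarith)
  have hbij : Function.Bijective F := by
    constructor
    · intro a c h
      by_cases ha : a ∈ D <;> by_cases hc : c ∈ D
      · rw [show F a = (b ⟨a, ha⟩ : X') from dif_pos ha,
          show F c = (b ⟨c, hc⟩ : X') from dif_pos hc] at h
        have := b.injective (Subtype.coe_injective h)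
        exact congrArg Subtype.val this
      · rw [show F a = (b ⟨a, ha⟩ : X') from dif_pos ha,
          show F c = (f ⟨c, hc⟩ : X') from dif_neg hc] at h
        exact absurd (h ▸ (b ⟨a, ha⟩).2) (f ⟨c, hc⟩).2
      · rw [show F a = (f ⟨a, ha⟩ : X') from dif_neg ha,
          show F c = (b ⟨c, hc⟩ : X') from dif_pos hc] at h
        exact absurd (h ▸ (b ⟨c, hc⟩).2) (f ⟨a, ha⟩).2
      · rw [show F a = (f ⟨a, ha⟩ : X') from dif_neg ha,
          show F c = (f ⟨c, hc⟩ : X') from dif_neg hc] at h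
        have := f.injective (Subtype.coe_injective h)
        exact congrArg Subtype.val this
    · intro x'
      by_cases hx' : x' ∈ D'
      · refine ⟨(b.symm ⟨x', hx'⟩ : X), ?_⟩
        have hmem : ((b.symm ⟨x', hx'⟩ : X)) ∈ D := (b.symm ⟨x', hx'⟩).2
        rw [show F _ = (b ⟨(b.symm ⟨x', hx'⟩ : X), hmem⟩ : X') from dif_pos hmem]
        congr 1
        rw [show (⟨(b.symm ⟨x', hx'⟩ : X), hmem⟩ : D) = b.symm ⟨x', hx'⟩ from rfl]
        exact congrArg Subtype.val (b.apply_symm_apply _)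
      · refine ⟨(f.symm ⟨x', hx'⟩ : X), ?_⟩
        have hmem : ((f.symm ⟨x', hx'⟩ : X)) ∈ Dᶜ := (f.symm ⟨x', hx'⟩).2
        rw [show F _ = (f ⟨(f.symm ⟨x', hx'⟩ : X), hmem⟩ : X') from dif_neg hmem]
        rw [show (⟨(f.symm ⟨x', hx'⟩ : X), hmem⟩ : (Dᶜ : Set X)) = f.symm ⟨x', hx'⟩ from rfl]
        exact congrArg Subtype.val (f.apply_symm_apply _)
  exact isHomeomorph_iff_continuous_bijective.mpr ⟨hcont, hbij⟩
end

section
/- Let T₁, T₂ be the Bass–Serre trees of free products A₁ * B₁ and A₂ * B₂ (edges indexed by group elements as above), and let Φ : A₁ * B₁ → A₂ * B₂ be the bijection induced by basepoint-preserving bijections α : A₁ → A₂, β : B₁ → B₂ via reduced normal forms. Then the map sending edge g ↦ Φ(g) extends to a simplicial isomorphism ι : T₁ → T₂ carrying the vertex stabilized by B₁ to the vertex stabilized by B₂. -/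
/-!
Every element of `A ∗ B` has a reduced word, and right multiplication by `a ∈ A` changes a
reduced word only at its end: the letter `(a, 1)` is appended, merged into a final letter
`(c, 1)`, or cancels it (similarly for `b ∈ B`). As `Φ` acts letterwise on reduced words, this
gives `Φ (g * a) ∈ Φ g * A₂`; the same argument for `Φ.symm`, which acts by `α⁻¹` and `β⁻¹`,
shows `g⁻¹ * g' ∈ A₁ ↔ (Φ g)⁻¹ * Φ g' ∈ A₂`, and likewise for the `B`-factors. So `Φ` descends
to bijections of the cosets of the factors, i.e. of the vertices of the Bass–Serre trees, and
the edge `g` goes to the edge `Φ g`.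
-/

open Monoid

/-- Reduced expressions in a free product `A ∗ B`. -/
def IsReducedWord {A B : Type*} [Group A] [Group B] (w : List (A × B)) : Prop :=
  (∀ i (h : i < w.length), 0 < i → (w.get ⟨i, h⟩).1 ≠ 1) ∧
  (∀ i (h : i < w.length), i + 1 < w.length → (w.get ⟨i, h⟩).2 ≠ 1) ∧
  w ≠ [(1, 1)]

/-- Evaluation of a word `[(a₁,b₁),…,(aₙ,bₙ)]` to `a₁b₁⋯aₙbₙ ∈ A ∗ B`. -/
def evalWord {A B : Type*} [Group A] [Group B] (w : List (A × B)) : Coprod A B :=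
  (w.map fun p => Coprod.inl p.1 * Coprod.inr p.2).prod

/-- Vertex set of the Bass–Serre tree of `A ∗ B`: the disjoint union `(A∗B)/A ⊔ (A∗B)/B`. -/
def BSVert (A B : Type*) [Group A] [Group B] : Type _ :=
  (Coprod A B ⧸ (Coprod.inl : A →* Coprod A B).range) ⊕
    (Coprod A B ⧸ (Coprod.inr : B →* Coprod A B).range)

/-- The Bass–Serre tree of `A ∗ B`: `g ∈ A ∗ B` gives an edge joining `gA` and `gB`. -/
def BSTree (A B : Type*) [Group A] [Group B] : SimpleGraph (BSVert A B) where
  Adj x y :=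
    (∃ g : Coprod A B, x = Sum.inl (QuotientGroup.mk g) ∧ y = Sum.inr (QuotientGroup.mk g)) ∨
    (∃ g : Coprod A B, x = Sum.inr (QuotientGroup.mk g) ∧ y = Sum.inl (QuotientGroup.mk g))
  symm := ⟨fun x y h =>
    h.elim (fun ⟨g, hx, hy⟩ => Or.inr ⟨g, hy, hx⟩) (fun ⟨g, hx, hy⟩ => Or.inl ⟨g, hy, hx⟩)⟩
  loopless := by
    constructor
    rintro x (⟨g, h1, h2⟩ | ⟨g, h1, h2⟩) <;> rw [h1] at h2 <;> simp at h2

section Words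

variable {A B : Type*} [Group A] [Group B]

theorem isReducedWord_iff {w : List (A × B)} :
    IsReducedWord w ↔
      (∀ p ∈ w.tail, p.1 ≠ 1) ∧ (∀ p ∈ w.dropLast, p.2 ≠ 1) ∧ w ≠ [(1, 1)] := by
  simp only [IsReducedWord, List.get_eq_getElem, List.forall_mem_iff_forall_getElem,
    List.getElem_tail, List.getElem_dropLast, List.length_tail, List.length_dropLast]
  refine and_congr ⟨fun h i hi => h (i + 1) (by omega) i.succ_pos, fun h i hi hi0 => ?_⟩
    (and_congr ⟨fun h i hi => h i (by omega) (by omega), fun h i hi hi1 => h i (by omega)⟩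
      Iff.rfl)
  obtain ⟨j, rfl⟩ := Nat.exists_eq_add_one_of_ne_zero hi0.ne'
  exact h j (by omega)

/-- The words that stay reduced when a letter `(a, b)` with `a ≠ 1` is appended: the proper
prefixes of reduced words. -/
def IsReducedPrefix (w : List (A × B)) : Prop :=
  (∀ p ∈ w.tail, p.1 ≠ 1) ∧ ∀ p ∈ w, p.2 ≠ 1

theorem IsReducedPrefix.isReducedWord {w : List (A × B)} (hw : IsReducedPrefix w) :
    IsReducedWord w :=
  isReducedWord_iff.2 ⟨hw.1, fun p hp => hw.2 p (List.mem_of_mem_dropLast hp),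
    fun h => hw.2 (1, 1) (by simp [h]) rfl⟩

theorem isReducedWord_nil : IsReducedWord ([] : List (A × B)) :=
  IsReducedPrefix.isReducedWord ⟨by simp, by simp⟩

theorem isReducedWord_append_singleton_iff {w : List (A × B)} {a : A} {b : B} :
    IsReducedWord (w ++ [(a, b)]) ↔
      IsReducedPrefix w ∧ (w ≠ [] → a ≠ 1) ∧ (w = [] → (a, b) ≠ (1, 1)) := by
  rcases w with _ | ⟨p, w⟩
  · simp [isReducedWord_iff, IsReducedPrefix]
  · rw [isReducedWord_iff, List.dropLast_concat]
    simp [IsReducedPrefix, or_imp, forall_and, -Prod.forall]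
    tauto

theorem isReducedPrefix_append_singleton_iff {w : List (A × B)} {a : A} {b : B} :
    IsReducedPrefix (w ++ [(a, b)]) ↔ IsReducedPrefix w ∧ (w ≠ [] → a ≠ 1) ∧ b ≠ 1 := by
  rcases w with _ | ⟨p, w⟩
  · simp [IsReducedPrefix]
  · simp only [IsReducedPrefix, List.cons_append, List.tail_cons, List.forall_mem_append,
      List.forall_mem_singleton, List.forall_mem_cons, ne_eq, reduceCtorEq, forall_const,
      not_false_eq_true]
    tauto

theorem isReducedWord_singleton_iff {a : A} {b : B} :
    IsReducedWord [(a, b)] ↔ (a, b) ≠ (1, 1) := by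
  simpa [IsReducedPrefix] using isReducedWord_append_singleton_iff (w := []) (a := a) (b := b)

@[simp]
theorem evalWord_nil : evalWord ([] : List (A × B)) = 1 := rfl

@[simp]
theorem evalWord_append (u v : List (A × B)) : evalWord (u ++ v) = evalWord u * evalWord v := by
  simp [evalWord]

@[simp]
theorem evalWord_cons (p : A × B) (w : List (A × B)) :
    evalWord (p :: w) = Coprod.inl p.1 * Coprod.inr p.2 * evalWord w := by
  simp [evalWord]

end Words

section Steps

variable {A₁ B₁ A₂ B₂ : Type*} [Group A₁] [Group B₁] [Group A₂] [Group B₂]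

theorem IsReducedWord.exists_mul_inl {β : B₁ → B₂} (hβ1 : β 1 = 1) (α : A₁ → A₂)
    {w : List (A₁ × B₁)} (hw : IsReducedWord w) (a : A₁) :
    ∃ w', IsReducedWord w' ∧ evalWord w' = evalWord w * Coprod.inl a ∧
      (evalWord (w.map (Prod.map α β)))⁻¹ * evalWord (w'.map (Prod.map α β)) ∈
        (Coprod.inl : A₂ →* Coprod A₂ B₂).range := by
  by_cases ha : a = 1
  · exact ⟨w, hw, by simp [ha], by simp⟩
  rcases List.eq_nil_or_concat w with rfl | ⟨w₀, ⟨c, d⟩, rfl⟩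
  · exact ⟨[(a, 1)], isReducedWord_singleton_iff.2 (by simp [ha]), by simp, α a, by simp [hβ1]⟩
  rw [List.concat_eq_append, isReducedWord_append_singleton_iff] at hw
  obtain ⟨hw₀, hc, -⟩ := hw
  by_cases hd : d = 1
  · subst hd
    by_cases hca : c * a = 1
    · refine ⟨w₀, hw₀.isReducedWord, ?_, (α c)⁻¹, ?_⟩
      · simp [mul_assoc, ← map_mul, hca]
      · simp [hβ1]
    · refine ⟨w₀ ++ [(c * a, 1)], isReducedWord_append_singleton_iff.2
        ⟨hw₀, fun _ => hca, fun _ => by simpa⟩, ?_, (α c)⁻¹ * α (c * a), ?_⟩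
      · simp [mul_assoc, ← map_mul]
      · simp [hβ1, mul_assoc]
  · refine ⟨w₀ ++ [(c, d)] ++ [(a, 1)], isReducedWord_append_singleton_iff.2
      ⟨isReducedPrefix_append_singleton_iff.2 ⟨hw₀, hc, hd⟩, fun _ => ha, by simp⟩,
      by simp [mul_assoc], α a, by simp [hβ1, mul_assoc]⟩

theorem IsReducedWord.exists_mul_inr {α : A₁ → A₂} (hα1 : α 1 = 1) (β : B₁ → B₂)
    {w : List (A₁ × B₁)} (hw : IsReducedWord w) (b : B₁) :
    ∃ w', IsReducedWord w' ∧ evalWord w' = evalWord w * Coprod.inr b ∧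
      (evalWord (w.map (Prod.map α β)))⁻¹ * evalWord (w'.map (Prod.map α β)) ∈
        (Coprod.inr : B₂ →* Coprod A₂ B₂).range := by
  by_cases hb : b = 1
  · exact ⟨w, hw, by simp [hb], by simp⟩
  rcases List.eq_nil_or_concat w with rfl | ⟨w₀, ⟨c, d⟩, rfl⟩
  · exact ⟨[(1, b)], isReducedWord_singleton_iff.2 (by simp [hb]), by simp, β b, by simp [hα1]⟩
  rw [List.concat_eq_append, isReducedWord_append_singleton_iff] at hw
  obtain ⟨hw₀, hc, -⟩ := hw
  by_cases hcancel : w₀ = [] ∧ c = 1 ∧ d * b = 1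
  · obtain ⟨rfl, rfl, hdb⟩ := hcancel
    exact ⟨[], isReducedWord_nil, by simp [← map_mul, hdb], (β d)⁻¹, by simp [hα1]⟩
  · refine ⟨w₀ ++ [(c, d * b)], isReducedWord_append_singleton_iff.2 ⟨hw₀, hc, ?_⟩,
      by simp [mul_assoc, ← map_mul], (β d)⁻¹ * β (d * b), by simp [mul_assoc]⟩
    intro hnil h
    exact hcancel ⟨hnil, by simpa using h⟩

end Steps

theorem exists_isReducedWord_evalWord_eq {A B : Type*} [Group A] [Group B] (g : Coprod A B) :
    ∃ w, IsReducedWord w ∧ evalWord w = g := by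
  -- `induction_on'` multiplies on the left, the word steps on the right, hence `g⁻¹`.
  suffices ∀ x : Coprod A B, ∃ w, IsReducedWord w ∧ evalWord w = x⁻¹ by simpa using this g⁻¹
  intro x
  induction x using Coprod.induction_on' with
  | one => exact ⟨[], isReducedWord_nil, by simp⟩
  | inl_mul a x ih =>
    obtain ⟨w, hw, hx⟩ := ih
    obtain ⟨w', hw', he, -⟩ := hw.exists_mul_inl (β := id) rfl id a⁻¹
    exact ⟨w', hw', by simp [he, hx]⟩
  | inr_mul b x ih =>
    obtain ⟨w, hw, hx⟩ := ih
    obtain ⟨w', hw', he, -⟩ := hw.exists_mul_inr (α := id) rfl id b⁻¹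
    exact ⟨w', hw', by simp [he, hx]⟩

theorem Equiv.inv_mul_mem_iff_of_mul_mem {G H : Type*} [Group G] [Group H] (Φ : G ≃ H)
    {K : Subgroup G} {L : Subgroup H} (hK : ∀ g, ∀ k ∈ K, (Φ g)⁻¹ * Φ (g * k) ∈ L)
    (hL : ∀ h, ∀ l ∈ L, (Φ.symm h)⁻¹ * Φ.symm (h * l) ∈ K) (g g' : G) :
    g⁻¹ * g' ∈ K ↔ (Φ g)⁻¹ * Φ g' ∈ L :=
  ⟨fun hg => by simpa using hK g _ hg, fun hg => by simpa using hL (Φ g) _ hg⟩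

section NormalFormMap

variable {A₁ B₁ A₂ B₂ : Type*} [Group A₁] [Group B₁] [Group A₂] [Group B₂]

def IsNormalFormMap (α : A₁ → A₂) (β : B₁ → B₂) (Φ : Coprod A₁ B₁ → Coprod A₂ B₂) : Prop :=
  ∀ w, IsReducedWord w → Φ (evalWord w) = evalWord (w.map (Prod.map α β))

variable {α : A₁ → A₂} {β : B₁ → B₂} {Φ : Coprod A₁ B₁ → Coprod A₂ B₂}

theorem IsNormalFormMap.inv_mul_map_mul_inl_mem (hβ1 : β 1 = 1) (hΦ : IsNormalFormMap α β Φ)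
    (g : Coprod A₁ B₁) (a : A₁) :
    (Φ g)⁻¹ * Φ (g * Coprod.inl a) ∈ (Coprod.inl : A₂ →* Coprod A₂ B₂).range := by
  obtain ⟨w, hw, rfl⟩ := exists_isReducedWord_evalWord_eq g
  obtain ⟨w', hw', he, hmem⟩ := hw.exists_mul_inl hβ1 α a
  rwa [← he, hΦ w hw, hΦ w' hw']

theorem IsNormalFormMap.inv_mul_map_mul_inr_mem (hα1 : α 1 = 1) (hΦ : IsNormalFormMap α β Φ)
    (g : Coprod A₁ B₁) (b : B₁) :
    (Φ g)⁻¹ * Φ (g * Coprod.inr b) ∈ (Coprod.inr : B₂ →* Coprod A₂ B₂).range := by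
  obtain ⟨w, hw, rfl⟩ := exists_isReducedWord_evalWord_eq g
  obtain ⟨w', hw', he, hmem⟩ := hw.exists_mul_inr hα1 β b
  rwa [← he, hΦ w hw, hΦ w' hw']

theorem IsReducedWord.map (hα : ∀ x, α x = 1 → x = 1) (hβ : ∀ y, β y = 1 → y = 1)
    {w : List (A₁ × B₁)} (hw : IsReducedWord w) : IsReducedWord (w.map (Prod.map α β)) := by
  rw [isReducedWord_iff] at hw ⊢
  obtain ⟨hA, hB, h11⟩ := hw
  refine ⟨?_, ?_, fun h => h11 ?_⟩
  · rw [← List.map_tail, List.forall_mem_map]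
    exact fun p hp h => hA p hp (hα _ h)
  · rw [← List.map_dropLast, List.forall_mem_map]
    exact fun p hp h => hB p hp (hβ _ h)
  · rcases w with _ | ⟨⟨a, b⟩, _ | _⟩ <;> simp at h ⊢
    exact ⟨hα a h.1, hβ b h.2⟩

theorem IsNormalFormMap.symm {eα : A₁ ≃ A₂} {eβ : B₁ ≃ B₂} (hα1 : eα 1 = 1) (hβ1 : eβ 1 = 1)
    {Φ : Coprod A₁ B₁ ≃ Coprod A₂ B₂} (hΦ : IsNormalFormMap eα eβ Φ) :
    IsNormalFormMap eα.symm eβ.symm Φ.symm := by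
  intro w hw
  have hw' := hw.map (α := eα.symm) (β := eβ.symm) (by simp [eα.symm_apply_eq, hα1])
    (by simp [eβ.symm_apply_eq, hβ1])
  rw [Φ.symm_apply_eq, hΦ _ hw', List.map_map, Prod.map_comp_map, eα.self_comp_symm,
    eβ.self_comp_symm, Prod.map_id, List.map_id]

theorem IsNormalFormMap.inv_mul_mem_range_inl_iff {eα : A₁ ≃ A₂} {eβ : B₁ ≃ B₂}
    (hα1 : eα 1 = 1) (hβ1 : eβ 1 = 1) {Φ : Coprod A₁ B₁ ≃ Coprod A₂ B₂}
    (hΦ : IsNormalFormMap eα eβ Φ) (g g' : Coprod A₁ B₁) :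
    g⁻¹ * g' ∈ (Coprod.inl : A₁ →* Coprod A₁ B₁).range ↔
      (Φ g)⁻¹ * Φ g' ∈ (Coprod.inl : A₂ →* Coprod A₂ B₂).range :=
  Φ.inv_mul_mem_iff_of_mul_mem
    (by rintro g _ ⟨a, rfl⟩; exact hΦ.inv_mul_map_mul_inl_mem hβ1 g a)
    (by rintro g _ ⟨a, rfl⟩
        exact (hΦ.symm hα1 hβ1).inv_mul_map_mul_inl_mem (eβ.symm_apply_eq.2 hβ1.symm) g a) g g'

theorem IsNormalFormMap.inv_mul_mem_range_inr_iff {eα : A₁ ≃ A₂} {eβ : B₁ ≃ B₂}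
    (hα1 : eα 1 = 1) (hβ1 : eβ 1 = 1) {Φ : Coprod A₁ B₁ ≃ Coprod A₂ B₂}
    (hΦ : IsNormalFormMap eα eβ Φ) (g g' : Coprod A₁ B₁) :
    g⁻¹ * g' ∈ (Coprod.inr : B₁ →* Coprod A₁ B₁).range ↔
      (Φ g)⁻¹ * Φ g' ∈ (Coprod.inr : B₂ →* Coprod A₂ B₂).range :=
  Φ.inv_mul_mem_iff_of_mul_mem
    (by rintro g _ ⟨b, rfl⟩; exact hΦ.inv_mul_map_mul_inr_mem hα1 g b)
    (by rintro g _ ⟨b, rfl⟩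
        exact (hΦ.symm hα1 hβ1).inv_mul_map_mul_inr_mem (eα.symm_apply_eq.2 hα1.symm) g b) g g'

end NormalFormMap

namespace BSTree

variable {A₁ B₁ A₂ B₂ : Type*} [Group A₁] [Group B₁] [Group A₂] [Group B₂]

theorem map_adj {f : BSVert A₁ B₁ → BSVert A₂ B₂} (φ : Coprod A₁ B₁ → Coprod A₂ B₂)
    (hl : ∀ g, f (Sum.inl (QuotientGroup.mk g)) = Sum.inl (QuotientGroup.mk (φ g)))
    (hr : ∀ g, f (Sum.inr (QuotientGroup.mk g)) = Sum.inr (QuotientGroup.mk (φ g)))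
    {x y : BSVert A₁ B₁} (h : (BSTree A₁ B₁).Adj x y) : (BSTree A₂ B₂).Adj (f x) (f y) := by
  rcases h with ⟨g, rfl, rfl⟩ | ⟨g, rfl, rfl⟩
  · exact Or.inl ⟨φ g, hl g, hr g⟩
  · exact Or.inr ⟨φ g, hr g, hl g⟩

variable (Φ : Coprod A₁ B₁ ≃ Coprod A₂ B₂)
    (hA : ∀ g g', g⁻¹ * g' ∈ (Coprod.inl : A₁ →* Coprod A₁ B₁).range ↔
      (Φ g)⁻¹ * Φ g' ∈ (Coprod.inl : A₂ →* Coprod A₂ B₂).range)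
    (hB : ∀ g g', g⁻¹ * g' ∈ (Coprod.inr : B₁ →* Coprod A₁ B₁).range ↔
      (Φ g)⁻¹ * Φ g' ∈ (Coprod.inr : B₂ →* Coprod A₂ B₂).range)

def vertEquivOfCosets : BSVert A₁ B₁ ≃ BSVert A₂ B₂ :=
  Equiv.sumCongr
    (Quotient.congr Φ fun g g' => by simpa only [QuotientGroup.leftRel_apply] using hA g g')
    (Quotient.congr Φ fun g g' => by simpa only [QuotientGroup.leftRel_apply] using hB g g')

def isoOfCosets : BSTree A₁ B₁ ≃g BSTree A₂ B₂ where
  toEquiv := vertEquivOfCosets Φ hA hB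
  map_rel_iff' := ⟨fun h => by
      simpa using map_adj (f := (vertEquivOfCosets Φ hA hB).symm) Φ.symm (fun _ => rfl)
        (fun _ => rfl) h,
    map_adj Φ (fun _ => rfl) (fun _ => rfl)⟩

end BSTree

/-- The normal-form bijection `Φ : A₁ ∗ B₁ → A₂ ∗ B₂` induced by basepoint-preserving
bijections `α`, `β` of the factors induces, via `edge g ↦ edge Φ(g)`, a simplicial
isomorphism of the Bass–Serre trees carrying the vertex stabilized by `B₁` to the vertex
stabilized by `B₂`. -/
theorem normal_form_bijection_induces_tree_isomorphism
    {A₁ B₁ A₂ B₂ : Type*} [Group A₁] [Group B₁] [Group A₂] [Group B₂]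
    (α : A₁ → A₂) (β : B₁ → B₂)
    (hα : Function.Bijective α) (hβ : Function.Bijective β)
    (hα1 : α 1 = 1) (hβ1 : β 1 = 1)
    (Φ : Coprod A₁ B₁ ≃ Coprod A₂ B₂)
    (hΦ : ∀ w : List (A₁ × B₁), IsReducedWord w →
        Φ (evalWord w) = evalWord (w.map fun p => (α p.1, β p.2))) :
    ∃ ι : BSTree A₁ B₁ ≃g BSTree A₂ B₂,
      (∀ g : Coprod A₁ B₁,
          ι (Sum.inl (QuotientGroup.mk g)) = Sum.inl (QuotientGroup.mk (Φ g)) ∧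
          ι (Sum.inr (QuotientGroup.mk g)) = Sum.inr (QuotientGroup.mk (Φ g))) ∧
      ι (Sum.inr (QuotientGroup.mk (1 : Coprod A₁ B₁))) =
        Sum.inr (QuotientGroup.mk (1 : Coprod A₂ B₂)) := by
  have hΦ : IsNormalFormMap (Equiv.ofBijective α hα) (Equiv.ofBijective β hβ) Φ := hΦ
  have hΦ1 : Φ 1 = 1 := by simpa using hΦ [] isReducedWord_nil
  exact ⟨BSTree.isoOfCosets Φ (hΦ.inv_mul_mem_range_inl_iff hα1 hβ1)
    (hΦ.inv_mul_mem_range_inr_iff hα1 hβ1), fun g => ⟨rfl, rfl⟩,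
    congrArg (fun g => Sum.inr (QuotientGroup.mk g)) hΦ1⟩
end
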